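/- arXiv:1910.07325 — 3 statements merged into one kernel-verified Lean document; each statement's English description precedes it below -/
import Mathlib

section
/- If U and V are independent uniform random variables on [0,1], then the random variable (U - V)^2 has probability density function z ↦ (1 - √z)/√z on (0,1). -/
/-!
By independence, the law of `(U - V)²` is the image of the uniform measure on the unit square
under `(x, y) ↦ (x - y)²`. Both this law and the claimed one live on `[0, 1]`, so it suffices to
compare their distribution functions there: for `0 ≤ c ≤ 1` the band `|x - y| ≤ √c` has area
`1 - (1 - √c)² = 2√c - c`, and so does `∫₀ᶜ (z^(-1/2) - 1) dz`.
-/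

open MeasureTheory ProbabilityTheory
open Set Metric
open scoped Interval

theorem ProbabilityTheory.IndepFun.map_comp_eq_map_prod {Ω α β γ : Type*} [MeasurableSpace Ω]
    [MeasurableSpace α] [MeasurableSpace β] [MeasurableSpace γ] {μ : Measure Ω}
    [IsFiniteMeasure μ] {X : Ω → α} {Y : Ω → β} (hXY : IndepFun X Y μ) (hX : AEMeasurable X μ)
    (hY : AEMeasurable Y μ) {f : α × β → γ} (hf : Measurable f) :
    μ.map (fun ω ↦ f (X ω, Y ω)) = ((μ.map X).prod (μ.map Y)).map f := by
  rw [← (indepFun_iff_map_prod_eq_prod_map_map hX hY).1 hXY,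
    AEMeasurable.map_map_of_aemeasurable hf.aemeasurable (hX.prodMk hY)]
  rfl

theorem MeasureTheory.Measure.ext_of_Iic_of_ae_mem_Icc {μ ν : Measure ℝ} [IsFiniteMeasure μ]
    {a b : ℝ} (hμ : ∀ᵐ x ∂μ, x ∈ Icc a b) (hν : ∀ᵐ x ∂ν, x ∈ Icc a b)
    (h : ∀ c ∈ Icc a b, μ (Iic c) = ν (Iic c)) : μ = ν := by
  have Iic_eq_inter : ∀ ρ : Measure ℝ, (∀ᵐ x ∂ρ, x ∈ Icc a b) →
      ∀ c, ρ (Iic c) = ρ (Iic c ∩ Icc a b) := fun ρ hρ c ↦ by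
    conv_lhs => rw [← Measure.restrict_eq_self_of_ae_mem hρ]
    exact Measure.restrict_apply measurableSet_Iic
  refine Measure.ext_of_Iic μ ν fun c ↦ ?_
  rw [Iic_eq_inter μ hμ, Iic_eq_inter ν hν]
  by_cases hc : a ≤ min c b
  · have hIic : Iic c ∩ Icc a b = Iic (min c b) ∩ Icc a b := by
      ext x
      simp only [mem_inter_iff, mem_Iic, mem_Icc, le_min_iff]
      tauto
    rw [hIic, ← Iic_eq_inter μ hμ, ← Iic_eq_inter ν hν]
    exact h _ ⟨hc, min_le_right c b⟩
  · have hempty : Iic c ∩ Icc a b = ∅ := by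
      ext x
      simp only [mem_inter_iff, mem_Iic, mem_Icc, mem_empty_iff_false, iff_false]
      rintro ⟨hxc, hax, hxb⟩
      exact hc (le_min (hax.trans hxc) (hax.trans hxb))
    simp [hempty]

theorem integral_max_sub_zero {a b c : ℝ} (hac : a ≤ c) (hcb : c ≤ b) :
    ∫ x in a..b, max (x - c) 0 = (b - c) ^ 2 / 2 := by
  have hcont : Continuous fun x : ℝ ↦ max (x - c) 0 := by fun_prop
  have h_left : ∫ x in a..c, max (x - c) 0 = ∫ _ in a..c, (0 : ℝ) :=
    intervalIntegral.integral_congr fun x hx ↦ by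
      rw [uIcc_of_le hac] at hx
      exact max_eq_right (by linarith [hx.2])
  have h_right : ∫ x in c..b, max (x - c) 0 = ∫ x in c..b, (x - c) :=
    intervalIntegral.integral_congr fun x hx ↦ by
      rw [uIcc_of_le hcb] at hx
      exact max_eq_left (by linarith [hx.1])
  rw [← intervalIntegral.integral_add_adjacent_intervals (hcont.intervalIntegrable a c)
    (hcont.intervalIntegrable c b), h_left, h_right,
    intervalIntegral.integral_comp_sub_right (fun x ↦ x), intervalIntegral.integral_zero,
    integral_id]
  ring

theorem integral_min_add_sub_max_sub {s : ℝ} (hs0 : 0 ≤ s) (hs1 : s ≤ 1) :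
    ∫ x in (0 : ℝ)..1, (min (x + s) 1 - max (x - s) 0) = 2 * s - s ^ 2 := by
  have hmin : ∀ x, min (x + s) 1 = x + s - max (x - (1 - s)) 0 := fun x ↦ by
    rcases le_total (x + s) 1 with h | h
    · rw [min_eq_left h, max_eq_right (by linarith)]; ring
    · rw [min_eq_right h, max_eq_left (by linarith)]; ring
  simp_rw [hmin]
  rw [intervalIntegral.integral_sub, intervalIntegral.integral_sub,
    intervalIntegral.integral_add, integral_id, intervalIntegral.integral_const,
    integral_max_sub_zero (by linarith) (by linarith), integral_max_sub_zero hs0 hs1]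
  · simp only [smul_eq_mul]
    ring
  all_goals exact Continuous.intervalIntegrable (by fun_prop) _ _

theorem volume_closedBall_inter_Icc {x s a b : ℝ} :
    volume (closedBall x s ∩ Icc a b) = ENNReal.ofReal (min (x + s) b - max (x - s) a) := by
  rw [Real.closedBall_eq_Icc, Icc_inter_Icc, Real.volume_Icc]

theorem one_sub_sqrt_div_sqrt_eq_rpow_sub_one {z : ℝ} (hz : 0 < z) :
    (1 - √z) / √z = z ^ (-(1 / 2) : ℝ) - 1 := by
  rw [Real.sqrt_eq_rpow, Real.rpow_neg hz.le, sub_div, div_self (by positivity), one_div]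

theorem eqOn_one_sub_sqrt_div_sqrt_uIoc {a : ℝ} (ha : 0 ≤ a) :
    EqOn (fun z : ℝ ↦ (1 - √z) / √z) (fun z ↦ z ^ (-(1 / 2) : ℝ) - 1) (Ι 0 a) := fun _ hz ↦
  one_sub_sqrt_div_sqrt_eq_rpow_sub_one (uIoc_of_le ha ▸ hz).1

theorem integral_one_sub_sqrt_div_sqrt {a : ℝ} (ha : 0 ≤ a) :
    ∫ z in (0 : ℝ)..a, (1 - √z) / √z = 2 * √a - a := by
  rw [intervalIntegral.integral_congr_ae
      (.of_forall fun _ hz ↦ eqOn_one_sub_sqrt_div_sqrt_uIoc ha hz),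
    intervalIntegral.integral_sub (intervalIntegral.intervalIntegrable_rpow' (by norm_num))
      intervalIntegrable_const,
    integral_rpow (Or.inl (by norm_num)), intervalIntegral.integral_const]
  norm_num [Real.sqrt_eq_rpow]
  ring

theorem lintegral_one_sub_sqrt_div_sqrt {a : ℝ} (ha0 : 0 ≤ a) (ha1 : a ≤ 1) :
    ∫⁻ z in Ioc 0 a, ENNReal.ofReal ((1 - √z) / √z) = ENNReal.ofReal (2 * √a - a) := by
  have hint : IntervalIntegrable (fun z : ℝ ↦ (1 - √z) / √z) volume 0 a :=
    (intervalIntegrable_congr (eqOn_one_sub_sqrt_div_sqrt_uIoc ha0)).2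
      ((intervalIntegral.intervalIntegrable_rpow' (by norm_num : (-1 : ℝ) < -(1 / 2))).sub
        intervalIntegrable_const)
  have hnonneg : ∀ z ∈ Ioc 0 a, 0 ≤ (1 - √z) / √z := fun z hz ↦
    div_nonneg (sub_nonneg.2 (Real.sqrt_le_one.2 (hz.2.trans ha1))) (Real.sqrt_nonneg z)
  rw [← ofReal_integral_eq_lintegral_ofReal
      ((intervalIntegrable_iff_integrableOn_Ioc_of_le ha0).1 hint)
      ((ae_restrict_mem measurableSet_Ioc).mono hnonneg),
    ← intervalIntegral.integral_of_le ha0, integral_one_sub_sqrt_div_sqrt ha0]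

theorem withDensity_one_sub_sqrt_div_sqrt_Iic {c : ℝ} (hc0 : 0 ≤ c) (hc1 : c ≤ 1) :
    (volume.restrict (Ioo (0 : ℝ) 1)).withDensity
      (fun z ↦ ENNReal.ofReal ((1 - √z) / √z)) (Iic c) = ENNReal.ofReal (2 * √c - c) := by
  rw [withDensity_apply _ measurableSet_Iic, Measure.restrict_restrict measurableSet_Iic,
    Measure.restrict_congr_set ((ae_eq_refl (Iic c)).inter Ioo_ae_eq_Ioc),
    Iic_inter_Ioc_of_le hc1, lintegral_one_sub_sqrt_div_sqrt hc0 hc1]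

section UnitSquare

local notation "𝕌" => volume.restrict (Icc (0 : ℝ) 1)

theorem unitSquare_setOf_dist_le {s : ℝ} (hs0 : 0 ≤ s) (hs1 : s ≤ 1) :
    Measure.prod 𝕌 𝕌 {p : ℝ × ℝ | dist p.1 p.2 ≤ s} = ENNReal.ofReal (2 * s - s ^ 2) := by
  have hslice : ∀ x : ℝ, Prod.mk x ⁻¹' {p : ℝ × ℝ | dist p.1 p.2 ≤ s} = closedBall x s :=
    fun x ↦ ext fun y ↦ mem_closedBall'.symm
  have hnonneg : ∀ x ∈ Icc (0 : ℝ) 1, 0 ≤ min (x + s) 1 - max (x - s) 0 := fun x hx ↦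
    sub_nonneg.2 (max_le (le_min (by linarith) (by linarith [hx.2]))
      (le_min (by linarith [hx.1]) zero_le_one))
  rw [Measure.prod_apply (measurableSet_le (by fun_prop) measurable_const)]
  simp_rw [hslice, Measure.restrict_apply measurableSet_closedBall, volume_closedBall_inter_Icc]
  rw [← ofReal_integral_eq_lintegral_ofReal (Continuous.integrableOn_Icc (by fun_prop))
      ((ae_restrict_mem measurableSet_Icc).mono hnonneg), integral_Icc_eq_integral_Ioc,
    ← intervalIntegral.integral_of_le zero_le_one,
    integral_min_add_sub_max_sub hs0 hs1]

theorem ae_map_sq_sub_unitSquare_mem_Icc :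
    ∀ᵐ z ∂(Measure.prod 𝕌 𝕌).map (fun p : ℝ × ℝ ↦ (p.1 - p.2) ^ 2), z ∈ Icc (0 : ℝ) 1 := by
  rw [ae_map_iff (p := (· ∈ Icc (0 : ℝ) 1)) (by fun_prop) measurableSet_Icc,
    Measure.prod_restrict]
  filter_upwards [ae_restrict_mem (measurableSet_Icc.prod measurableSet_Icc)]
    with ⟨x, y⟩ ⟨⟨hx0, hx1⟩, hy0, hy1⟩
  exact ⟨sq_nonneg _, by nlinarith⟩

theorem map_sq_sub_unitSquare_Iic {c : ℝ} (hc0 : 0 ≤ c) (hc1 : c ≤ 1) :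
    (Measure.prod 𝕌 𝕌).map (fun p : ℝ × ℝ ↦ (p.1 - p.2) ^ 2) (Iic c) =
      ENNReal.ofReal (2 * √c - c) := by
  have hpre : (fun p : ℝ × ℝ ↦ (p.1 - p.2) ^ 2) ⁻¹' Iic c = {p | dist p.1 p.2 ≤ √c} := by
    ext p
    change _ ≤ c ↔ dist p.1 p.2 ≤ √c
    rw [Real.dist_eq, Real.le_sqrt (abs_nonneg _) hc0, sq_abs]
  rw [Measure.map_apply (by fun_prop) measurableSet_Iic, hpre,
    unitSquare_setOf_dist_le (Real.sqrt_nonneg c) (Real.sqrt_le_one.2 hc1),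
    Real.sq_sqrt hc0]

end UnitSquare

/-- If U and V are independent uniform random variables on [0,1], then (U - V)^2
has probability density function z ↦ (1 - √z)/√z on (0,1). -/
theorem sq_diff_uniform_density
    {Ω : Type*} [MeasureSpace Ω] [IsProbabilityMeasure (ℙ : Measure Ω)]
    (U V : Ω → ℝ) (hU : Measurable U) (hV : Measurable V)
    (hIndep : IndepFun U V ℙ)
    (hUunif : Measure.map U ℙ = volume.restrict (Set.Icc (0 : ℝ) 1))
    (hVunif : Measure.map V ℙ = volume.restrict (Set.Icc (0 : ℝ) 1)) :
    Measure.map (fun ω => (U ω - V ω) ^ 2) ℙ =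
      (volume.restrict (Set.Ioo (0 : ℝ) 1)).withDensity
        (fun z => ENNReal.ofReal ((1 - Real.sqrt z) / Real.sqrt z)) := by
  have hlaw := hIndep.map_comp_eq_map_prod hU.aemeasurable hV.aemeasurable
    (f := fun p : ℝ × ℝ ↦ (p.1 - p.2) ^ 2) (by fun_prop)
  rw [hUunif, hVunif] at hlaw
  refine hlaw.trans (Measure.ext_of_Iic_of_ae_mem_Icc ae_map_sq_sub_unitSquare_mem_Icc ?_
    fun c hc ↦ ?_)
  · exact (withDensity_absolutelyContinuous _ _).ae_le
      ((ae_restrict_mem measurableSet_Ioo).mono fun _ h ↦ Ioo_subset_Icc_self h)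
  · rw [map_sq_sub_unitSquare_Iic hc.1 hc.2, withDensity_one_sub_sqrt_div_sqrt_Iic hc.1 hc.2]
end

section
/- Let X = (X_1,…,X_H) be a random vector with each coordinate uniformly distributed on [0,1], and let u ∈ [0,1]^H. Then E‖X - u‖₂ ≥ √H / 4. -/
open MeasureTheory ProbabilityTheory

/-! By Cauchy–Schwarz, `∑ h, |X h - u h| ≤ √H · ‖X - u‖₂` pointwise, so `√H · E‖X - u‖₂` is at least
`∑ h, E|X h - u h|`, which depends only on the marginals. For `Y` uniform on `[0, 1]` and any real
`c`, `E|Y - c| ≥ 1/4`: on `[0, 1/2]` bound `|x - c| ≥ c - x`, on `[1/2, 1]` bound `|x - c| ≥ x - c`,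
and the two integrals add up to `1/4` independently of `c`. -/

open Finset in
theorem Finset.sum_abs_le_sqrt_card_mul_sqrt_sum_sq {ι : Type*} (s : Finset ι) (f : ι → ℝ) :
    ∑ i ∈ s, |f i| ≤ √(#s : ℝ) * √(∑ i ∈ s, f i ^ 2) := by
  rw [← Real.sqrt_mul (Nat.cast_nonneg _)]
  apply Real.le_sqrt_of_sq_le
  simpa only [sq_abs] using sq_sum_le_card_mul_sum_sq (s := s) (f := fun i => |f i|)

theorem Finset.sqrt_sum_sq_le_sum_abs {ι : Type*} (s : Finset ι) (f : ι → ℝ) :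
    √(∑ i ∈ s, f i ^ 2) ≤ ∑ i ∈ s, |f i| := by
  rw [Real.sqrt_le_left (Finset.sum_nonneg fun i _ => abs_nonneg _)]
  simpa only [sq_abs] using
    Finset.sum_sq_le_sq_sum_of_nonneg (s := s) (f := fun i => |f i|) fun i _ => abs_nonneg _

theorem le_integral_Icc_abs_sub (c : ℝ) : 1 / 4 ≤ ∫ x in Set.Icc (0 : ℝ) 1, |x - c| := by
  have hint : ∀ a b : ℝ, IntervalIntegrable (fun x => |x - c|) volume a b := fun a b =>
    (continuous_id.sub continuous_const).abs.intervalIntegrable a b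
  rw [integral_Icc_eq_integral_Ioc, ← intervalIntegral.integral_of_le zero_le_one,
    ← intervalIntegral.integral_add_adjacent_intervals (hint 0 (1 / 2)) (hint (1 / 2) 1)]
  have left : c / 2 - 1 / 8 ≤ ∫ x in (0 : ℝ)..1 / 2, |x - c| := by
    calc c / 2 - 1 / 8 = ∫ x in (0 : ℝ)..1 / 2, (c - x) := by
          rw [intervalIntegral.integral_sub intervalIntegrable_const
            intervalIntegral.intervalIntegrable_id, intervalIntegral.integral_const, integral_id]
          ring
      _ ≤ ∫ x in (0 : ℝ)..1 / 2, |x - c| :=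
          intervalIntegral.integral_mono (by norm_num)
            (intervalIntegrable_const.sub intervalIntegral.intervalIntegrable_id) (hint _ _)
            fun x => by simpa using neg_le_abs (x - c)
  have right : 3 / 8 - c / 2 ≤ ∫ x in (1 / 2 : ℝ)..1, |x - c| := by
    calc 3 / 8 - c / 2 = ∫ x in (1 / 2 : ℝ)..1, (x - c) := by
          rw [intervalIntegral.integral_sub intervalIntegral.intervalIntegrable_id
            intervalIntegrable_const, intervalIntegral.integral_const, integral_id]
          ring
      _ ≤ ∫ x in (1 / 2 : ℝ)..1, |x - c| :=
          intervalIntegral.integral_mono (by norm_num)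
            (intervalIntegral.intervalIntegrable_id.sub intervalIntegrable_const) (hint _ _)
            fun x => le_abs_self (x - c)
  linarith

section UniformOnUnitInterval

variable {Ω : Type*} [MeasurableSpace Ω] {μ : Measure Ω} {Y : Ω → ℝ}

theorem aemeasurable_of_map_eq_uniform (hY : μ.map Y = volume.restrict (Set.Icc 0 1)) :
    AEMeasurable Y μ :=
  .of_map_ne_zero (by simp [hY])

theorem integrable_abs_sub_of_map_eq_uniform (hY : μ.map Y = volume.restrict (Set.Icc 0 1))
    (c : ℝ) : Integrable (fun ω => |Y ω - c|) μ := by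
  have hg : Continuous fun y : ℝ => |y - c| := (continuous_id.sub continuous_const).abs
  refine (integrable_map_measure hg.aestronglyMeasurable (aemeasurable_of_map_eq_uniform hY)).mp ?_
  rw [hY]
  exact hg.integrableOn_Icc

theorem le_integral_abs_sub_of_map_eq_uniform (hY : μ.map Y = volume.restrict (Set.Icc 0 1))
    (c : ℝ) : 1 / 4 ≤ ∫ ω, |Y ω - c| ∂μ := by
  have hg : Continuous fun y : ℝ => |y - c| := (continuous_id.sub continuous_const).abs
  rw [← integral_map (aemeasurable_of_map_eq_uniform hY) hg.aestronglyMeasurable, hY]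
  exact le_integral_Icc_abs_sub c

end UniformOnUnitInterval

theorem expectation_euclidean_dist_ge_general
    {Ω : Type*} [MeasureSpace Ω]
    {H : ℕ} (X : Ω → Fin H → ℝ)
    (hXunif : ∀ h : Fin H,
      Measure.map (fun ω => X ω h) ℙ = volume.restrict (Set.Icc (0 : ℝ) 1))
    (u : Fin H → ℝ) :
    Real.sqrt H / 4 ≤ ∫ ω, Real.sqrt (∑ h, (X ω h - u h) ^ 2) ∂ℙ := by
  have habs (h : Fin H) : Integrable (fun ω => |X ω h - u h|) ℙ :=
    integrable_abs_sub_of_map_eq_uniform (hXunif h) (u h)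
  have hsum_int : Integrable (fun ω => ∑ h, |X ω h - u h|) ℙ :=
    integrable_finsetSum _ fun h _ => habs h
  have hdist_int : Integrable (fun ω => √(∑ h, (X ω h - u h) ^ 2)) ℙ := by
    have hmeas := fun h => aemeasurable_of_map_eq_uniform (hXunif h)
    refine hsum_int.mono' (by fun_prop) (ae_of_all _ fun ω => ?_)
    rw [Real.norm_of_nonneg (Real.sqrt_nonneg _)]
    exact Finset.sqrt_sum_sq_le_sum_abs _ _
  have key : (H : ℝ) / 4 ≤ √H * ∫ ω, √(∑ h, (X ω h - u h) ^ 2) ∂ℙ :=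
    calc (H : ℝ) / 4 = ∑ _h : Fin H, (1 / 4 : ℝ) := by
          rw [Finset.sum_const, Finset.card_univ, Fintype.card_fin, nsmul_eq_mul]; ring
      _ ≤ ∑ h, ∫ ω, |X ω h - u h| ∂ℙ :=
        Finset.sum_le_sum fun h _ => le_integral_abs_sub_of_map_eq_uniform (hXunif h) (u h)
      _ = ∫ ω, ∑ h, |X ω h - u h| ∂ℙ := (integral_finsetSum _ fun h _ => habs h).symm
      _ ≤ ∫ ω, √H * √(∑ h, (X ω h - u h) ^ 2) ∂ℙ :=
        integral_mono hsum_int (hdist_int.const_mul _) fun ω => by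
          simpa using Finset.sum_abs_le_sqrt_card_mul_sqrt_sum_sq Finset.univ fun h => X ω h - u h
      _ = √H * ∫ ω, √(∑ h, (X ω h - u h) ^ 2) ∂ℙ := integral_const_mul _ _
  have hnonneg : 0 ≤ ∫ ω, √(∑ h, (X ω h - u h) ^ 2) ∂ℙ :=
    integral_nonneg fun ω => Real.sqrt_nonneg _
  nlinarith [Real.sq_sqrt (Nat.cast_nonneg (α := ℝ) H)]

/-- Lemma 1 (lower bound): if each coordinate of X is uniform on [0,1] and
u ∈ [0,1]^H, then E‖X - u‖₂ ≥ √H / 4. -/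
theorem expectation_euclidean_dist_ge
    {Ω : Type*} [MeasureSpace Ω] [IsProbabilityMeasure (ℙ : Measure Ω)]
    {H : ℕ} (X : Ω → Fin H → ℝ) (hX : Measurable X)
    (hXunif : ∀ h : Fin H,
      Measure.map (fun ω => X ω h) ℙ = volume.restrict (Set.Icc (0 : ℝ) 1))
    (u : Fin H → ℝ) (hu : ∀ h, u h ∈ Set.Icc (0 : ℝ) 1) :
    Real.sqrt H / 4 ≤ ∫ ω, Real.sqrt (∑ h, (X ω h - u h) ^ 2) ∂ℙ :=
  expectation_euclidean_dist_ge_general X hXunif u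
end

section
/- For a real-valued random variable X with cumulative distribution function F and a real number y, the CRPS identity holds: ∫ (F(z) - 1{y < z})² dz = E|X - y| - (1/2)E|X - X̃|, where X̃ is an independent copy of X, provided E|X| < ∞. -/
/-! For reals `a, b`, `z ↦ (1{a ≤ z} - 1{b ≤ z})²` is the indicator of the interval between `a`
and `b`, so its integral is `|a - b|`. By Fubini, `E|X - y|` and `E|X - X̃|` are therefore the
`z`-integrals of `E(U_z - 1{y ≤ z})²` and `E(U_z - Ũ_z)²`, where `U_z = 1{X ≤ z}` and
`Ũ_z = 1{X̃ ≤ z}`. For each `z`, `E(U_z - c)² = Var U_z + (F(z) - c)²`, while independence and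
equal laws give `E(U_z - Ũ_z)² = 2 Var U_z`; the variance cancels. Finally `1{y < z} = 1{y ≤ z}`
off the null set `{y}`. -/

open MeasureTheory ProbabilityTheory Set

lemma sq_indicator_Iic_sub_indicator_Iic (a b z : ℝ) :
    ((Iic z).indicator (1 : ℝ → ℝ) a - (Iic z).indicator 1 b) ^ 2 =
      (Ico (min a b) (max a b)).indicator 1 z := by
  simp only [indicator_apply, mem_Iic, mem_Ico, Pi.one_apply, min_le_iff, lt_max_iff]
  split_ifs <;> grind

lemma integral_sq_indicator_Iic_sub_indicator_Iic (a b : ℝ) :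
    ∫ z, ((Iic z).indicator (1 : ℝ → ℝ) a - (Iic z).indicator 1 b) ^ 2 = |a - b| := by
  simp_rw [sq_indicator_Iic_sub_indicator_Iic, integral_indicator_one measurableSet_Ico,
    Real.volume_real_Ico_of_le min_le_max]
  exact max_sub_min_eq_abs' a b

lemma integrable_sq_indicator_Iic_sub_indicator_Iic (a b : ℝ) :
    Integrable fun z => ((Iic z).indicator (1 : ℝ → ℝ) a - (Iic z).indicator 1 b) ^ 2 := by
  simp_rw [sq_indicator_Iic_sub_indicator_Iic]
  exact (integrable_indicator_iff measurableSet_Ico).2 (integrableOn_const measure_Ico_lt_top.ne)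

lemma measurable_prod_indicator_Iic {Ω : Type*} {mΩ : MeasurableSpace Ω} {W : Ω → ℝ}
    (hW : Measurable W) : Measurable fun p : Ω × ℝ => (Iic p.2).indicator (1 : ℝ → ℝ) (W p.1) :=
  measurable_one.indicator (measurableSet_le (hW.comp measurable_fst) measurable_snd)

section Fubini

variable {Ω : Type*} {mΩ : MeasurableSpace Ω} {μ : Measure Ω} {W V : Ω → ℝ}

lemma integrable_prod_sq_indicator_Iic_sub_indicator_Iic (hW : Measurable W) (hV : Measurable V)
    (hWV : Integrable (fun ω => |W ω - V ω|) μ) :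
    Integrable (fun p : Ω × ℝ => ((Iic p.2).indicator (1 : ℝ → ℝ) (W p.1) -
      (Iic p.2).indicator 1 (V p.1)) ^ 2) (μ.prod volume) := by
  have hmeas : Measurable fun p : Ω × ℝ => ((Iic p.2).indicator (1 : ℝ → ℝ) (W p.1) -
      (Iic p.2).indicator 1 (V p.1)) ^ 2 :=
    ((measurable_prod_indicator_Iic hW).sub (measurable_prod_indicator_Iic hV)).pow_const 2
  refine (integrable_prod_iff hmeas.aestronglyMeasurable).2 ⟨?_, ?_⟩
  · exact ae_of_all _ fun ω => integrable_sq_indicator_Iic_sub_indicator_Iic (W ω) (V ω)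
  · refine hWV.congr (ae_of_all _ fun ω => ?_)
    simp only [norm_pow, Real.norm_eq_abs, sq_abs]
    exact (integral_sq_indicator_Iic_sub_indicator_Iic _ _).symm

lemma integral_integral_sq_indicator_Iic_sub_indicator_Iic [SFinite μ] (hW : Measurable W)
    (hV : Measurable V) (hWV : Integrable (fun ω => |W ω - V ω|) μ) :
    ∫ z, ∫ ω, ((Iic z).indicator (1 : ℝ → ℝ) (W ω) - (Iic z).indicator 1 (V ω)) ^ 2 ∂μ =
      ∫ ω, |W ω - V ω| ∂μ := by
  rw [← integral_integral_swap (integrable_prod_sq_indicator_Iic_sub_indicator_Iic hW hV hWV)]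
  simp_rw [integral_sq_indicator_Iic_sub_indicator_Iic]

end Fubini

namespace ProbabilityTheory

variable {Ω : Type*} {mΩ : MeasurableSpace Ω} {μ : Measure Ω} [IsProbabilityMeasure μ]
  {U V : Ω → ℝ}

lemma integral_sub_const_sq (hU : MemLp U 2 μ) (c : ℝ) :
    ∫ ω, (U ω - c) ^ 2 ∂μ = Var[U; μ] + (μ[U] - c) ^ 2 := by
  have hUc : MemLp (fun ω => U ω - c) 2 μ := hU.sub (memLp_const c)
  have := variance_eq_sub hUc
  rw [variance_sub_const hU.aestronglyMeasurable, integral_sub (hU.integrable one_le_two)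
    (integrable_const c), integral_const] at this
  simp only [probReal_univ, smul_eq_mul, one_mul, Pi.pow_apply] at this
  linarith

lemma IndepFun.integral_sub_sq_of_identDistrib (hU : MemLp U 2 μ) (hUV : IndepFun U V μ)
    (hid : IdentDistrib U V μ μ) :
    ∫ ω, (U ω - V ω) ^ 2 ∂μ = 2 * Var[U; μ] := by
  have hV : MemLp V 2 μ := hid.memLp_snd hU
  have := variance_eq_sub (hU.sub hV)
  simp only [Pi.pow_apply, Pi.sub_apply] at this
  rw [variance_sub hU hV, hUV.covariance_eq_zero hU hV, ← hid.variance_eq,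
    integral_sub (hU.integrable one_le_two) (hV.integrable one_le_two), ← hid.integral_eq,
    sub_self] at this
  linarith

lemma sq_integral_sub_const_eq_of_indepFun (hU : MemLp U 2 μ) (hUV : IndepFun U V μ)
    (hid : IdentDistrib U V μ μ) (c : ℝ) :
    (μ[U] - c) ^ 2 = ∫ ω, (U ω - c) ^ 2 ∂μ - 1 / 2 * ∫ ω, (U ω - V ω) ^ 2 ∂μ := by
  rw [integral_sub_const_sq hU, hUV.integral_sub_sq_of_identDistrib hU hid]
  ring

lemma sq_measureReal_le_sub_eq {X Xt : Ω → ℝ} (hX : Measurable X) (hIndep : IndepFun X Xt μ)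
    (hid : IdentDistrib X Xt μ μ) (z c : ℝ) :
    (μ.real {ω | X ω ≤ z} - c) ^ 2 =
      ∫ ω, ((Iic z).indicator (1 : ℝ → ℝ) (X ω) - c) ^ 2 ∂μ -
        1 / 2 * ∫ ω, ((Iic z).indicator (1 : ℝ → ℝ) (X ω) - (Iic z).indicator 1 (Xt ω)) ^ 2 ∂μ := by
  have hg : Measurable ((Iic z).indicator (1 : ℝ → ℝ)) := measurable_one.indicator measurableSet_Iic
  have hU : MemLp (fun ω => (Iic z).indicator (1 : ℝ → ℝ) (X ω)) 2 μ :=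
    (memLp_const 1).indicator (hX measurableSet_Iic)
  have hmean : ∫ ω, (Iic z).indicator (1 : ℝ → ℝ) (X ω) ∂μ = μ.real {ω | X ω ≤ z} :=
    integral_indicator_one (hX measurableSet_Iic)
  rw [← hmean]
  exact sq_integral_sub_const_eq_of_indepFun hU (hIndep.comp hg hg) (hid.comp hg) c

end ProbabilityTheory

/-- The CRPS identity: for an integrable real random variable X with cdf F and an
independent copy X̃, and y ∈ ℝ,
∫ (F(z) - 1{y < z})² dz = E|X - y| - (1/2) E|X - X̃|. -/
theorem crps_identity
    {Ω : Type*} [MeasureSpace Ω] [IsProbabilityMeasure (ℙ : Measure Ω)]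
    (X Xt : Ω → ℝ) (hX : Measurable X) (hXt : Measurable Xt)
    (hInt : Integrable X ℙ)
    (hIndep : IndepFun X Xt ℙ)
    (hSameLaw : Measure.map Xt ℙ = Measure.map X ℙ)
    (y : ℝ) :
    ∫ z, ((ℙ {ω | X ω ≤ z}).toReal - (if y < z then (1 : ℝ) else 0)) ^ 2 =
      (∫ ω, |X ω - y| ∂ℙ) - (1 / 2) * ∫ ω, |X ω - Xt ω| ∂ℙ := by
  have hid : IdentDistrib X Xt ℙ ℙ := ⟨hX.aemeasurable, hXt.aemeasurable, hSameLaw.symm⟩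
  have hXy : Integrable (fun ω => |X ω - y|) ℙ := (hInt.sub (integrable_const y)).abs
  have hXXt : Integrable (fun ω => |X ω - Xt ω|) ℙ := (hInt.sub (hid.integrable_snd hInt)).abs
  have hXy' :=
    (integrable_prod_sq_indicator_Iic_sub_indicator_Iic hX measurable_const hXy).integral_prod_right
  have hXXt' :=
    (integrable_prod_sq_indicator_Iic_sub_indicator_Iic hX hXt hXXt).integral_prod_right
  rw [← integral_integral_sq_indicator_Iic_sub_indicator_Iic hX measurable_const hXy,
    ← integral_integral_sq_indicator_Iic_sub_indicator_Iic hX hXt hXXt, ← integral_const_mul,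
    ← integral_sub hXy' (hXXt'.const_mul _)]
  refine integral_congr_ae ?_
  filter_upwards [volume.ae_ne y] with z hzy
  have hstep : (if y < z then (1 : ℝ) else 0) = (Iic z).indicator 1 y := by
    simp [indicator_apply, hzy.symm.le_iff_lt]
  rw [hstep]
  exact sq_measureReal_le_sub_eq hX hIndep hid z _
end
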